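/- arXiv:1701.00208 — 3 statements merged into one kernel-verified Lean document; each statement's English description precedes it below -/
import Mathlib

section
/- If 𝒯'₀ is a generating set for an E-closed set 𝒯₀ and every theory T ∈ 𝒯'₀ is isolated by some sentence φ ∈ T with (𝒯'₀)_φ = {T}, then 𝒯'₀ is the least generating set: it is contained in every generating set for 𝒯₀. -/
open Set

variable {σ : Type*}

/-- For a family 𝒯 of theories (sets of sentences) and a sentence φ,
`Tphi 𝒯 φ` is the set 𝒯_φ = {T ∈ 𝒯 | φ ∈ T}. -/
def Tphi (𝒯 : Set (Set σ)) (φ : σ) : Set (Set σ) := {T ∈ 𝒯 | φ ∈ T}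

/-- E-closure relative to the ambient set `S` of all complete theories:
`ClE S 𝒯 = 𝒯 ∪ {T ∈ S | ∀ φ ∈ T, 𝒯_φ is infinite}`. -/
def ClE (S 𝒯 : Set (Set σ)) : Set (Set σ) :=
  𝒯 ∪ {T ∈ S | ∀ φ ∈ T, (Tphi 𝒯 φ).Infinite}

/-- 𝒯 is E-closed if it equals its own E-closure. -/
def EClosed (S 𝒯 : Set (Set σ)) : Prop := ClE S 𝒯 = 𝒯

/-- `𝒯'` is a generating set for `𝒯`. -/
def Generates (S 𝒯' 𝒯 : Set (Set σ)) : Prop := 𝒯' ⊆ 𝒯 ∧ ClE S 𝒯' = 𝒯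

/-- `𝒯'` is the least generating set for `𝒯`. -/
def IsLeastGen (S 𝒯' 𝒯 : Set (Set σ)) : Prop :=
  Generates S 𝒯' 𝒯 ∧ ∀ 𝒯'', Generates S 𝒯'' 𝒯 → 𝒯' ⊆ 𝒯''

/-- `T` is an isolated point of `𝒯`: some sentence φ ∈ T has 𝒯_φ = {T}. -/
def IsolatedIn (𝒯 : Set (Set σ)) (T : Set σ) : Prop := ∃ φ ∈ T, Tphi 𝒯 φ = {T}

/-- The meet operation ∧′: E-closure of the set of isolated points of 𝒯₁ ∩ 𝒯₂. -/
def meetI (S 𝒯₁ 𝒯₂ : Set (Set σ)) : Set (Set σ) :=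
  ClE S {T ∈ 𝒯₁ ∩ 𝒯₂ | IsolatedIn (𝒯₁ ∩ 𝒯₂) T}

/-!
If `T ∈ 𝒯'₀` is isolated by `φ`, then `(𝒯'₀)_φ = {T}` is finite. Every theory of `ClE S 𝒯`
containing a sentence `φ` with `𝒯_φ` finite already lies in `𝒯`; applied to `𝒯'₀` this gives
`𝒯''_φ ⊆ (𝒯'₀)_φ` for any generating set `𝒯''`, so `𝒯''_φ` is finite too, and applied to `𝒯''`
it puts `T` into `𝒯''`.
-/

theorem mem_of_mem_ClE_of_finite {S 𝒯 : Set (Set σ)} {T : Set σ} {φ : σ}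
    (hfin : (Tphi 𝒯 φ).Finite) (hT : T ∈ ClE S 𝒯) (hφ : φ ∈ T) : T ∈ 𝒯 :=
  hT.resolve_right fun h => h.2 φ hφ hfin

theorem Tphi_subset_of_subset_ClE {S 𝒯₁ 𝒯₂ : Set (Set σ)} {φ : σ}
    (hfin : (Tphi 𝒯₂ φ).Finite) (h : 𝒯₁ ⊆ ClE S 𝒯₂) : Tphi 𝒯₁ φ ⊆ Tphi 𝒯₂ φ :=
  fun _ hT => ⟨mem_of_mem_ClE_of_finite hfin (h hT.1) hT.2, hT.2⟩

theorem isolated_gen_least_general {σ : Type*} (S 𝒯'₀ 𝒯₀ : Set (Set σ))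
    (hgen : Generates S 𝒯'₀ 𝒯₀)
    (hiso : ∀ T ∈ 𝒯'₀, IsolatedIn 𝒯'₀ T) :
    ∀ 𝒯'', Generates S 𝒯'' 𝒯₀ → 𝒯'₀ ⊆ 𝒯'' := by
  rintro 𝒯'' ⟨hsub, hcl⟩ T hT
  obtain ⟨φ, hφT, hsingle⟩ := hiso T hT
  have hfin₀ : (Tphi 𝒯'₀ φ).Finite := hsingle ▸ finite_singleton T
  have hfin : (Tphi 𝒯'' φ).Finite :=
    hfin₀.subset (Tphi_subset_of_subset_ClE hfin₀ (hgen.2 ▸ hsub))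
  exact mem_of_mem_ClE_of_finite hfin (hcl ▸ hgen.1 hT) hφT

/-- Theorem 1.3, (3) ⇒ (1): if every theory of a generating set 𝒯'₀ is isolated by some
(𝒯'₀)_φ then 𝒯'₀ is contained in every generating set for 𝒯₀. -/
theorem isolated_gen_least {σ : Type*} (S 𝒯'₀ 𝒯₀ : Set (Set σ))
    (hS : ∀ T ∈ S, T.Nonempty) (h𝒯 : 𝒯₀ ⊆ S)
    (hcl : EClosed S 𝒯₀) (hgen : Generates S 𝒯'₀ 𝒯₀)
    (hiso : ∀ T ∈ 𝒯'₀, IsolatedIn 𝒯'₀ T) :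
    ∀ 𝒯'', Generates S 𝒯'' 𝒯₀ → 𝒯'₀ ⊆ 𝒯'' :=
  isolated_gen_least_general S 𝒯'₀ 𝒯₀ hgen hiso
end

section
/- If 𝒯'₀ generates the E-closed set 𝒯₀, then a theory T ∈ 𝒯'₀ is isolated in 𝒯'₀ (some φ ∈ T has (𝒯'₀)_φ = {T}) if and only if T is isolated in 𝒯₀ (some ψ ∈ T has (𝒯₀)_ψ = {T}). -/
open Set

variable {σ : Type*}

lemma Tphi_mono {𝒯' 𝒯 : Set (Set σ)} (h : 𝒯' ⊆ 𝒯) (φ : σ) : Tphi 𝒯' φ ⊆ Tphi 𝒯 φ :=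
  fun _ hT' => ⟨h hT'.1, hT'.2⟩

/-- A theory added by the E-closure lies in `𝒯_φ` only for `φ` with `𝒯_φ` infinite. -/
lemma Tphi_ClE_of_finite (S : Set (Set σ)) {𝒯 : Set (Set σ)} {φ : σ}
    (hfin : (Tphi 𝒯 φ).Finite) : Tphi (ClE S 𝒯) φ = Tphi 𝒯 φ := by
  refine Subset.antisymm ?_ (Tphi_mono subset_union_left φ)
  rintro T' ⟨hT' | ⟨-, hinf⟩, hφT'⟩
  · exact ⟨hT', hφT'⟩
  · exact absurd hfin (hinf φ hφT')

lemma IsolatedIn.of_superset {𝒯' 𝒯 : Set (Set σ)} {T : Set σ} (h : 𝒯' ⊆ 𝒯) (hT : T ∈ 𝒯')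
    (hiso : IsolatedIn 𝒯 T) : IsolatedIn 𝒯' T := by
  obtain ⟨φ, hφT, hφ⟩ := hiso
  refine ⟨φ, hφT, Subset.antisymm ?_ ?_⟩
  · exact hφ ▸ Tphi_mono h φ
  · rintro _ rfl
    exact ⟨hT, hφT⟩

lemma IsolatedIn.ClE (S : Set (Set σ)) {𝒯 : Set (Set σ)} {T : Set σ}
    (hiso : IsolatedIn 𝒯 T) : IsolatedIn (ClE S 𝒯) T := by
  obtain ⟨φ, hφT, hφ⟩ := hiso
  refine ⟨φ, hφT, ?_⟩
  rw [Tphi_ClE_of_finite S (hφ ▸ finite_singleton T), hφ]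

lemma isolatedIn_ClE_iff (S : Set (Set σ)) {𝒯 : Set (Set σ)} {T : Set σ} (hT : T ∈ 𝒯) :
    IsolatedIn (ClE S 𝒯) T ↔ IsolatedIn 𝒯 T :=
  ⟨IsolatedIn.of_superset subset_union_left hT, IsolatedIn.ClE S⟩

theorem isolated_iff_general {σ : Type*} (S 𝒯'₀ 𝒯₀ : Set (Set σ))
    (hgen : Generates S 𝒯'₀ 𝒯₀)
    (T : Set σ) (hT : T ∈ 𝒯'₀) :
    IsolatedIn 𝒯'₀ T ↔ IsolatedIn 𝒯₀ T := by
  rw [← hgen.2, isolatedIn_ClE_iff S hT]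

/-- Theorem 1.3, (3) ⇔ (4): for a generating set 𝒯'₀ of the E-closed set 𝒯₀, a theory
T ∈ 𝒯'₀ is isolated in 𝒯'₀ iff it is isolated in 𝒯₀. -/
theorem isolated_iff {σ : Type*} (S 𝒯'₀ 𝒯₀ : Set (Set σ))
    (hS : ∀ T ∈ S, T.Nonempty) (h𝒯 : 𝒯₀ ⊆ S)
    (hcl : EClosed S 𝒯₀) (hgen : Generates S 𝒯'₀ 𝒯₀)
    (T : Set σ) (hT : T ∈ 𝒯'₀) :
    IsolatedIn 𝒯'₀ T ↔ IsolatedIn 𝒯₀ T :=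
  isolated_iff_general S 𝒯'₀ 𝒯₀ hgen T hT
end

section
/- If 𝒯 is an E-closed family with least generating set 𝒯', then the map sending a subset A ⊆ 𝒯' to Cl_E(A) is an order-isomorphism between the Boolean algebra of all subsets of 𝒯' and the family ℬ(𝒯) of E-closed subsets of 𝒯 generated by subsets of 𝒯', ordered by inclusion; in particular ℬ(𝒯) is a Boolean algebra isomorphic to the powerset algebra of 𝒯'. -/
/-!
`Cl_E` is a closure operator on families of theories. Every `T` in the least generating set `𝒯'`
contains a sentence `φ` with `𝒯'_φ` finite: otherwise `T` lies in the closure of `𝒯' \ {T}`, which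
would then be a smaller generating set. Such a `φ` keeps `T` out of `Cl_E(B)` for every `B ⊆ 𝒯'`
not containing `T`, so `A ↦ Cl_E(A)` reflects inclusion on subsets of `𝒯'`; it is therefore an
order embedding of the powerset of `𝒯'`, whose range is `ℬ(𝒯)` by definition.
-/

open Set

variable {σ : Type*}

section Closure

variable {S A B : Set (Set σ)}

lemma subset_clE (S A : Set (Set σ)) : A ⊆ ClE S A := subset_union_left

lemma tphi_mono (h : A ⊆ B) (φ : σ) : Tphi A φ ⊆ Tphi B φ :=
  fun _ hT => ⟨h hT.1, hT.2⟩

lemma tphi_diff (A B : Set (Set σ)) (φ : σ) : Tphi (A \ B) φ = Tphi A φ \ B := by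
  ext T
  simp only [Tphi, mem_sdiff, mem_ofPred_eq]
  tauto

lemma clE_mono (S : Set (Set σ)) (h : A ⊆ B) : ClE S A ⊆ ClE S B := by
  rintro T (hT | ⟨hTS, hinf⟩)
  · exact Or.inl (h hT)
  · exact Or.inr ⟨hTS, fun φ hφ => (hinf φ hφ).mono (tphi_mono h φ)⟩

lemma clE_clE (S A : Set (Set σ)) : ClE S (ClE S A) = ClE S A := by
  refine subset_antisymm ?_ (subset_clE S _)
  rintro T (hT | ⟨hTS, hinf⟩)
  · exact hT
  refine Or.inr ⟨hTS, fun φ hφ => ?_⟩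
  -- Either some new point of the closure contains `φ`, and then `A_φ` is infinite by its very
  -- membership, or `(Cl_E A)_φ = A_φ`.
  by_cases hnew : ∃ U ∈ S, φ ∈ U ∧ ∀ ψ ∈ U, (Tphi A ψ).Infinite
  · obtain ⟨U, -, hφU, hU⟩ := hnew
    exact hU φ hφU
  · refine (hinf φ hφ).mono ?_
    rintro U ⟨hU | ⟨hUS, hUinf⟩, hφU⟩
    · exact ⟨hU, hφU⟩
    · exact absurd ⟨U, hUS, hφU, hUinf⟩ hnew

lemma clE_subset_clE_of_subset_clE (h : A ⊆ ClE S B) : ClE S A ⊆ ClE S B :=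
  clE_clE S B ▸ clE_mono S h

lemma clE_diff_singleton {T : Set σ} (hTS : T ∈ S) (hT : ∀ φ ∈ T, (Tphi A φ).Infinite) :
    ClE S (A \ {T}) = ClE S A := by
  refine subset_antisymm (clE_mono S sdiff_subset) (clE_subset_clE_of_subset_clE ?_)
  intro U hU
  by_cases hUT : U = T
  · subst hUT
    refine Or.inr ⟨hTS, fun φ hφ => ?_⟩
    rw [tphi_diff]
    exact (hT φ hφ).sdiff (finite_singleton U)
  · exact Or.inl ⟨hU, hUT⟩

lemma subset_of_clE_subset_clE {𝒯' : Set (Set σ)}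
    (hfin : ∀ T ∈ 𝒯', ∃ φ ∈ T, (Tphi 𝒯' φ).Finite)
    (hA : A ⊆ 𝒯') (hB : B ⊆ 𝒯') (h : ClE S A ⊆ ClE S B) : A ⊆ B := by
  intro T hT
  rcases h (subset_clE S A hT) with hTB | ⟨-, hinf⟩
  · exact hTB
  · obtain ⟨φ, hφ, hφfin⟩ := hfin T (hA hT)
    exact absurd (hφfin.subset (tphi_mono hB φ)) (hinf φ hφ)

lemma clE_subset_clE_iff {𝒯' : Set (Set σ)} (hfin : ∀ T ∈ 𝒯', ∃ φ ∈ T, (Tphi 𝒯' φ).Finite)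
    (hA : A ⊆ 𝒯') (hB : B ⊆ 𝒯') : ClE S A ⊆ ClE S B ↔ A ⊆ B :=
  ⟨subset_of_clE_subset_clE hfin hA hB, clE_mono S⟩

end Closure

lemma IsLeastGen.exists_mem_tphi_finite {S 𝒯 𝒯' : Set (Set σ)} (h𝒯S : 𝒯 ⊆ S)
    (hg : IsLeastGen S 𝒯' 𝒯) : ∀ T ∈ 𝒯', ∃ φ ∈ T, (Tphi 𝒯' φ).Finite := by
  intro T hT
  by_contra! hinf
  have hgen : Generates S (𝒯' \ {T}) 𝒯 :=
    ⟨sdiff_subset.trans hg.1.1, (clE_diff_singleton (h𝒯S (hg.1.1 hT)) hinf).trans hg.1.2⟩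
  exact (hg.2 _ hgen hT).2 rfl

def clEOrderEmbedding (S 𝒯' : Set (Set σ)) (hfin : ∀ T ∈ 𝒯', ∃ φ ∈ T, (Tphi 𝒯' φ).Finite) :
    Set ↥𝒯' ↪o Set (Set σ) :=
  OrderEmbedding.ofMapLEIff (fun A => ClE S ((↑) '' A)) fun A B =>
    (clE_subset_clE_iff hfin (Subtype.coe_image_subset _ A) (Subtype.coe_image_subset _ B)).trans
      (image_subset_image_iff Subtype.coe_injective)

lemma range_clEOrderEmbedding (S 𝒯' : Set (Set σ))
    (hfin : ∀ T ∈ 𝒯', ∃ φ ∈ T, (Tphi 𝒯' φ).Finite) :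
    range (clEOrderEmbedding S 𝒯' hfin) = {B | ∃ A, A ⊆ 𝒯' ∧ B = ClE S A} := by
  ext B
  constructor
  · rintro ⟨A, rfl⟩
    exact ⟨_, Subtype.coe_image_subset _ A, rfl⟩
  · rintro ⟨A, hA, rfl⟩
    refine ⟨(↑) ⁻¹' A, ?_⟩
    simp only [clEOrderEmbedding, OrderEmbedding.coe_ofMapLEIff, Subtype.image_preimage_coe,
      inter_eq_right.mpr hA]

theorem boolean_algebra_iso_general {σ : Type*} (S 𝒯 𝒯' : Set (Set σ))
    (h𝒯S : 𝒯 ⊆ S) (hg : IsLeastGen S 𝒯' 𝒯) :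
    (∀ A, A ⊆ 𝒯' → EClosed S (ClE S A) ∧ ClE S A ⊆ 𝒯) ∧
    ∃ e : Set ↥𝒯' ≃o ↥{B : Set (Set σ) | ∃ A, A ⊆ 𝒯' ∧ B = ClE S A},
      ∀ A : Set ↥𝒯', ((e A : Set (Set σ)) = ClE S ((↑) '' A)) := by
  refine ⟨fun A hA => ⟨clE_clE S A, hg.1.2 ▸ clE_mono S hA⟩, ?_⟩
  have hfin := hg.exists_mem_tphi_finite h𝒯S
  exact ⟨(clEOrderEmbedding S 𝒯' hfin).orderIso.trans
    (OrderIso.setCongr _ _ (range_clEOrderEmbedding S 𝒯' hfin)), fun _ => rfl⟩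

/-- Remark 2.9: for an E-closed 𝒯 with least generating set 𝒯', the map A ↦ Cl_E(A) is an
order-isomorphism from the powerset Boolean algebra of 𝒯' onto the family
ℬ(𝒯) = {Cl_E(A) | A ⊆ 𝒯'} of E-closed subsets of 𝒯, ordered by inclusion. -/
theorem boolean_algebra_iso {σ : Type*} (S 𝒯 𝒯' : Set (Set σ))
    (hS : ∀ T ∈ S, T.Nonempty) (h𝒯S : 𝒯 ⊆ S)
    (hcl : EClosed S 𝒯) (hg : IsLeastGen S 𝒯' 𝒯) :
    (∀ A, A ⊆ 𝒯' → EClosed S (ClE S A) ∧ ClE S A ⊆ 𝒯) ∧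
    ∃ e : Set ↥𝒯' ≃o ↥{B : Set (Set σ) | ∃ A, A ⊆ 𝒯' ∧ B = ClE S A},
      ∀ A : Set ↥𝒯', ((e A : Set (Set σ)) = ClE S ((↑) '' A)) :=
  boolean_algebra_iso_general S 𝒯 𝒯' h𝒯S hg
end
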